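/- Let V ≥ 1 be an integer, γ > 0, σ₀ > 0, σ > 0 reals, and y ∈ ℝ^{1+2V} an arbitrary observation vector. Let K be the (1+2V)×(1+2V) Gram matrix of the one-dimensional VQE kernel at the equidistant angles α_w = 2πw/(1+2V), and for a test angle α' ∈ ℝ let k' ∈ ℝ^{1+2V} have entries k'_w = σ₀²·(γ² + 2·∑_{v=1}^{V} cos(v·(α_w − α')))/(γ² + 2V). Then with ε = σ²/σ₀², the GP posterior mean μ(α') = k'ᵀ·(K + σ²·I)⁻¹·y satisfies μ(α') = η₀ + ∑_{v=1}^{V} ( η_{cos,v}·√2·cos(v·α') + η_{sin,v}·√2·sin(v·α') ), where η₀ = ( γ² / ( (γ² + 2V)·ε + (1+2V)·γ² ) )·∑_{w=0}^{2V} y_w, η_{cos,v} = ( 1 / ( (γ² + 2V)·ε + 1 + 2V ) )·∑_{w=0}^{2V} y_w·√2·cos( 2π·v·w/(1+2V) ), and η_{sin,v} = ( 1 / ( (γ² + 2V)·ε + 1 + 2V ) )·∑_{w=0}^{2V} y_w·√2·sin( 2π·v·w/(1+2V) ). -/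

import Mathlib

/-!
Summing cosines in arithmetic progression by telescoping against `2 sin (d / 2)` shows that
over the `N = 1 + 2V` equidistant angles `α_w` the harmonics `v = 1, …, V` average to zero, and
that the Dirichlet kernel `∑ v, cos (v (α_w - α_w'))` is `V` on the diagonal and `-1/2` off it.
So `K + σ² I = q I + p 𝟙𝟙ᵀ`, whose inverse is explicit, and only the constant part of `k'`
sees the rank-one term. The posterior weight of `y_w` is therefore `c γ² / D + (2 c / q) s_w`
with `c = σ₀² / (γ² + 2V)`, `D = q + N p` and `s_w = ∑ v, cos (v (α_w - α'))`; expanding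
`cos (v α_w - v α')` splits it into the `√2`-normalised Fourier coefficients of `y`.
-/

open Real Finset Matrix

theorem sum_range_cos_add_mul_mul_two_sin (a d : ℝ) (n : ℕ) :
    (∑ j ∈ range n, cos (a + j * d)) * (2 * sin (d / 2)) =
      sin (a + n * d - d / 2) - sin (a - d / 2) := by
  induction n with
  | zero => simp
  | succ n ih =>
    have step : sin (a + (n + 1) * d - d / 2) - sin (a + n * d - d / 2) =
        cos (a + n * d) * (2 * sin (d / 2)) := by
      rw [sin_sub_sin]; ring_nf
    rw [sum_range_succ, add_mul, ih, Nat.cast_succ, ← step]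
    ring

theorem sin_int_mul_pi_div_ne_zero {N : ℕ} {m : ℤ} (hN : N ≠ 0) (hm : ¬ (N : ℤ) ∣ m) :
    sin (m * π / N) ≠ 0 := by
  rw [Ne, sin_eq_zero_iff]
  rintro ⟨n, hn⟩
  rw [eq_div_iff (by positivity)] at hn
  refine hm ⟨n, ?_⟩
  exact_mod_cast (mul_right_cancel₀ pi_ne_zero (by linarith : (m : ℝ) * π = (N * n) * π))

theorem sum_range_cos_add_mul_two_pi_mul_div_eq_zero {N : ℕ} {v : ℤ} (hv : ¬ (N : ℤ) ∣ v) (a : ℝ) :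
    ∑ j ∈ range N, cos (a + j * (2 * π * v / N)) = 0 := by
  obtain rfl | hN := eq_or_ne N 0
  · simp
  have hsin : 2 * sin (2 * π * v / N / 2) ≠ 0 := by
    rw [show 2 * π * v / N / 2 = v * π / N by ring]
    exact mul_ne_zero two_ne_zero (sin_int_mul_pi_div_ne_zero hN hv)
  have hperiod : a + N * (2 * π * v / N) - 2 * π * v / N / 2 =
      a - 2 * π * v / N / 2 + v * (2 * π) := by
    field_simp; ring
  have := sum_range_cos_add_mul_mul_two_sin a (2 * π * v / N) N
  rw [hperiod, sin_add_int_mul_two_pi, sub_self] at this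
  exact (mul_eq_zero.mp this).resolve_right hsin

theorem sum_Icc_cos_nat_mul_two_pi_mul_div_eq_neg_half {V : ℕ} {m : ℤ} (hm : ¬ ((1 + 2 * V : ℕ) : ℤ) ∣ m) :
    ∑ v ∈ Icc 1 V, cos (v * (2 * π * m / (1 + 2 * V : ℕ))) = -1 / 2 := by
  set x := 2 * π * m / (1 + 2 * V : ℕ)
  have hsin : sin (x / 2) ≠ 0 := by
    rw [show x / 2 = m * π / (1 + 2 * V : ℕ) by ring]
    exact sin_int_mul_pi_div_ne_zero (by omega) hm
  have hdirichlet : (∑ j ∈ range V, cos (x + j * x)) * (2 * sin (x / 2)) = - sin (x / 2) := by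
    rw [sum_range_cos_add_mul_mul_two_sin, show x + V * x - x / 2 = m * π by
      simp only [x]; push_cast; field_simp; ring, sin_int_mul_pi]
    ring_nf
  have hreindex : ∑ v ∈ Icc 1 V, cos (v * x) = ∑ j ∈ range V, cos (x + j * x) := by
    rw [← Ico_add_one_right_eq_Icc, sum_Ico_eq_sum_range]
    refine sum_congr (by simp) fun j _ => ?_
    push_cast; ring_nf
  rw [hreindex]
  field_simp at hdirichlet ⊢
  linarith

theorem inv_smul_one_add_const {ι 𝕜 : Type*} [Fintype ι] [DecidableEq ι] [Field 𝕜] {p q : 𝕜}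
    (hq : q ≠ 0) (hpq : q + Fintype.card ι * p ≠ 0) :
    (q • 1 + of fun _ _ : ι => p)⁻¹ =
      q⁻¹ • (1 - of fun _ _ : ι => p / (q + Fintype.card ι * p)) := by
  set J : Matrix ι ι 𝕜 := of fun _ _ => 1
  have hJ : J * J = (Fintype.card ι : 𝕜) • J := by ext; simp [J, mul_apply]
  have hconst (c : 𝕜) : (of fun _ _ : ι => c) = c • J := by ext; simp [J]
  refine inv_eq_right_inv ?_
  simp only [hconst, add_mul, mul_sub, mul_smul_comm, smul_mul_assoc, one_mul, mul_one, hJ,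
    smul_smul, smul_sub]
  have hb : p / (q + Fintype.card ι * p) * (q + Fintype.card ι * p) = p := div_mul_cancel₀ p hpq
  match_scalars
  · field_simp
  · linear_combination (-q⁻¹) * hb

theorem vecMul_inv_smul_one_add_const {ι 𝕜 : Type*} [Fintype ι] [DecidableEq ι] [Field 𝕜] {p q : 𝕜}
    (hq : q ≠ 0) (hpq : q + Fintype.card ι * p ≠ 0) (k : ι → 𝕜) (j : ι) :
    (k ᵥ* (q • 1 + of fun _ _ : ι => p)⁻¹) j =
      (k j - p / (q + Fintype.card ι * p) * ∑ i, k i) / q := by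
  rw [inv_smul_one_add_const hq hpq, vecMul_smul, vecMul_sub, vecMul_one]
  simp only [Pi.smul_apply, Pi.sub_apply, vecMul, dotProduct, of_apply, ← sum_mul, smul_eq_mul]
  ring

theorem sum_Icc_cos_nat_mul_equidistant_sub_equidistant {V : ℕ} (w w' : Fin (1 + 2 * V)) :
    ∑ v ∈ Icc 1 V, cos (v * (2 * π * (w : ℕ) / (1 + 2 * V) - 2 * π * (w' : ℕ) / (1 + 2 * V))) =
      if w = w' then (V : ℝ) else -1 / 2 := by
  split_ifs with hww'
  · simp [hww']
  have hndvd : ¬ ((1 + 2 * V : ℕ) : ℤ) ∣ ((w : ℕ) - (w' : ℕ) : ℤ) := fun hdvd =>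
    hww' <| Fin.ext <| by
      have := Int.eq_zero_of_abs_lt_dvd hdvd (abs_sub_lt_iff.mpr (by omega))
      omega
  rw [← sum_Icc_cos_nat_mul_two_pi_mul_div_eq_neg_half hndvd]
  refine sum_congr rfl fun v _ => ?_
  push_cast
  ring_nf

theorem sum_sum_Icc_cos_nat_mul_equidistant_sub (V : ℕ) (α : ℝ) :
    ∑ w : Fin (1 + 2 * V), ∑ v ∈ Icc 1 V, cos (v * (2 * π * (w : ℕ) / (1 + 2 * V) - α)) = 0 := by
  rw [sum_comm]
  refine sum_eq_zero fun v hv => ?_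
  have hndvd : ¬ ((1 + 2 * V : ℕ) : ℤ) ∣ (v : ℤ) := by
    rw [mem_Icc] at hv
    exact_mod_cast fun hdvd => absurd (Nat.le_of_dvd (by omega) hdvd) (by omega)
  rw [← sum_range_cos_add_mul_two_pi_mul_div_eq_zero hndvd (-(v * α)), ← Fin.sum_univ_eq_sum_range]
  refine sum_congr rfl fun w _ => ?_
  push_cast
  ring_nf

theorem mul_sum_sqrt_two_cos_add_mul_sum_sqrt_two_sin {ι : Type*} [Fintype ι] (a φ : ℝ)
    (y θ : ι → ℝ) :
    a * (∑ w, y w * (√2 * cos (θ w))) * (√2 * cos φ) +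
        a * (∑ w, y w * (√2 * sin (θ w))) * (√2 * sin φ) =
      2 * a * ∑ w, y w * cos (θ w - φ) := by
  simp only [mul_sum, sum_mul, ← sum_add_distrib, cos_sub]
  refine sum_congr rfl fun w _ => ?_
  linear_combination a * y w * (cos (θ w) * cos φ + sin (θ w) * sin φ) *
    mul_self_sqrt (zero_le_two : (0 : ℝ) ≤ 2)

theorem add_smul_one_eq_of_equidistant_kernel {V : ℕ} {a b γ r : ℝ}
    {K : Matrix (Fin (1 + 2 * V)) (Fin (1 + 2 * V)) ℝ}
    (hK : ∀ w w' : Fin (1 + 2 * V), K w w' = a * (γ ^ 2 + 2 * ∑ v ∈ Icc 1 V,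
      cos (v * (2 * π * (w : ℕ) / (1 + 2 * V) - 2 * π * (w' : ℕ) / (1 + 2 * V)))) / b) :
    K + r • 1 = (a / b * (1 + 2 * V) + r) • 1 + of fun _ _ => a / b * (γ ^ 2 - 1) := by
  ext w w'
  simp only [Matrix.add_apply, Matrix.smul_apply, of_apply, one_apply, hK,
    sum_Icc_cos_nat_mul_equidistant_sub_equidistant, smul_eq_mul]
  split_ifs <;> ring

theorem sum_eq_of_equidistant_kernel {V : ℕ} {a b γ α : ℝ} {k : Fin (1 + 2 * V) → ℝ}
    (hk : ∀ w : Fin (1 + 2 * V), k w = a * (γ ^ 2 + 2 * ∑ v ∈ Icc 1 V,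
      cos (v * (2 * π * (w : ℕ) / (1 + 2 * V) - α))) / b) :
    ∑ w, k w = (1 + 2 * V) * (a / b) * γ ^ 2 := by
  simp only [hk, mul_add, add_div, sum_add_distrib, ← sum_div, ← mul_sum,
    sum_sum_Icc_cos_nat_mul_equidistant_sub, Fin.sum_const, nsmul_eq_mul, mul_zero, zero_div,
    add_zero]
  push_cast
  ring

theorem sum_mul_add_sum_Icc_sqrt_two_cos_sin {n V : ℕ} (y : Fin n → ℝ) (a b L α : ℝ) :
    a * ∑ w, y w + ∑ v ∈ Icc 1 V,
        (b * (∑ w : Fin n, y w * (√2 * cos (2 * π * v * (w : ℕ) / L))) * (√2 * cos (v * α)) +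
          b * (∑ w : Fin n, y w * (√2 * sin (2 * π * v * (w : ℕ) / L))) * (√2 * sin (v * α))) =
      ∑ w : Fin n, (a + 2 * b * ∑ v ∈ Icc 1 V, cos (v * (2 * π * (w : ℕ) / L - α))) * y w := by
  simp only [mul_sum_sqrt_two_cos_add_mul_sum_sqrt_two_sin]
  simp only [add_mul, sum_add_distrib, mul_sum, sum_mul]
  rw [sum_comm (s := Icc 1 V)]
  congr 1
  refine sum_congr rfl fun w _ => sum_congr rfl fun v _ => ?_
  ring_nf

theorem posterior_mean_regularized_dft_general
    (V : ℕ) (γ σ₀ σ : ℝ) (hγ : 0 < γ) (hσ₀ : 0 < σ₀)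
    (y : Fin (1 + 2 * V) → ℝ) (α' : ℝ)
    (K : Matrix (Fin (1 + 2 * V)) (Fin (1 + 2 * V)) ℝ)
    (hK : ∀ w w' : Fin (1 + 2 * V),
      K w w' = σ₀ ^ 2 *
        (γ ^ 2 + 2 * ∑ v ∈ Finset.Icc 1 V,
          Real.cos ((v : ℝ) *
            (2 * Real.pi * (w : ℕ) / (1 + 2 * V) - 2 * Real.pi * (w' : ℕ) / (1 + 2 * V)))) /
        (γ ^ 2 + 2 * V))
    (k' : Fin (1 + 2 * V) → ℝ)
    (hk' : ∀ w : Fin (1 + 2 * V),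
      k' w = σ₀ ^ 2 *
        (γ ^ 2 + 2 * ∑ v ∈ Finset.Icc 1 V,
          Real.cos ((v : ℝ) * (2 * Real.pi * (w : ℕ) / (1 + 2 * V) - α'))) /
        (γ ^ 2 + 2 * V)) :
    k' ⬝ᵥ ((K + σ ^ 2 • (1 : Matrix (Fin (1 + 2 * V)) (Fin (1 + 2 * V)) ℝ))⁻¹).mulVec y =
      (γ ^ 2 / ((γ ^ 2 + 2 * V) * (σ ^ 2 / σ₀ ^ 2) + (1 + 2 * V) * γ ^ 2)) * (∑ w, y w) +
      ∑ v ∈ Finset.Icc 1 V,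
        ((1 / ((γ ^ 2 + 2 * V) * (σ ^ 2 / σ₀ ^ 2) + 1 + 2 * V)) *
            (∑ w, y w * (Real.sqrt 2 * Real.cos (2 * Real.pi * v * (w : ℕ) / (1 + 2 * V)))) *
            (Real.sqrt 2 * Real.cos ((v : ℝ) * α')) +
          (1 / ((γ ^ 2 + 2 * V) * (σ ^ 2 / σ₀ ^ 2) + 1 + 2 * V)) *
            (∑ w, y w * (Real.sqrt 2 * Real.sin (2 * Real.pi * v * (w : ℕ) / (1 + 2 * V)))) *
            (Real.sqrt 2 * Real.sin ((v : ℝ) * α'))) := by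
  have hc : 0 < σ₀ ^ 2 / (γ ^ 2 + 2 * V) := by positivity
  set c := σ₀ ^ 2 / (γ ^ 2 + 2 * V) with hc_def
  set p := c * (γ ^ 2 - 1)
  set q := c * (1 + 2 * V) + σ ^ 2
  have hq : 0 < q := by positivity
  have hD : q + Fintype.card (Fin (1 + 2 * V)) * p = (1 + 2 * V) * c * γ ^ 2 + σ ^ 2 := by
    rw [Fintype.card_fin]; push_cast; ring
  have hD_pos : 0 < (1 + 2 * V) * c * γ ^ 2 + σ ^ 2 := by positivity
  -- `(γ² + 2V) ε = σ² / c`, so the paper's two denominators are `D / c` and `q / c`.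
  have hE0 : γ ^ 2 / ((γ ^ 2 + 2 * V) * (σ ^ 2 / σ₀ ^ 2) + (1 + 2 * V) * γ ^ 2) =
      c * γ ^ 2 / ((1 + 2 * V) * c * γ ^ 2 + σ ^ 2) := by
    rw [hc_def]; field_simp; ring
  have hE1 : 1 / ((γ ^ 2 + 2 * V) * (σ ^ 2 / σ₀ ^ 2) + 1 + 2 * V) = c / q := by
    simp only [q, hc_def]; field_simp; ring
  rw [dotProduct_mulVec, add_smul_one_eq_of_equidistant_kernel hK, dotProduct,
    sum_mul_add_sum_Icc_sqrt_two_cos_sin, hE0, hE1]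
  refine sum_congr rfl fun w _ => ?_
  rw [vecMul_inv_smul_one_add_const hq.ne' (hD ▸ hD_pos.ne'), hD,
    sum_eq_of_equidistant_kernel hk', hk' w, mul_div_right_comm, ← hc_def]
  generalize ∑ v ∈ Icc 1 V, cos (v * (2 * π * (w : ℕ) / (1 + 2 * V) - α')) = t
  clear_value c
  field_simp
  ring

/-- GP posterior mean with the VQE kernel at `1 + 2V` equidistant observations
is a regularized discrete Fourier transform of the observations (Section A.2.2). -/
theorem posterior_mean_regularized_dft
    (V : ℕ) (hV : 1 ≤ V) (γ σ₀ σ : ℝ) (hγ : 0 < γ) (hσ₀ : 0 < σ₀) (hσ : 0 < σ)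
    (y : Fin (1 + 2 * V) → ℝ) (α' : ℝ)
    (K : Matrix (Fin (1 + 2 * V)) (Fin (1 + 2 * V)) ℝ)
    (hK : ∀ w w' : Fin (1 + 2 * V),
      K w w' = σ₀ ^ 2 *
        (γ ^ 2 + 2 * ∑ v ∈ Finset.Icc 1 V,
          Real.cos ((v : ℝ) *
            (2 * Real.pi * (w : ℕ) / (1 + 2 * V) - 2 * Real.pi * (w' : ℕ) / (1 + 2 * V)))) /
        (γ ^ 2 + 2 * V))
    (k' : Fin (1 + 2 * V) → ℝ)
    (hk' : ∀ w : Fin (1 + 2 * V),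
      k' w = σ₀ ^ 2 *
        (γ ^ 2 + 2 * ∑ v ∈ Finset.Icc 1 V,
          Real.cos ((v : ℝ) * (2 * Real.pi * (w : ℕ) / (1 + 2 * V) - α'))) /
        (γ ^ 2 + 2 * V)) :
    k' ⬝ᵥ ((K + σ ^ 2 • (1 : Matrix (Fin (1 + 2 * V)) (Fin (1 + 2 * V)) ℝ))⁻¹).mulVec y =
      (γ ^ 2 / ((γ ^ 2 + 2 * V) * (σ ^ 2 / σ₀ ^ 2) + (1 + 2 * V) * γ ^ 2)) * (∑ w, y w) +
      ∑ v ∈ Finset.Icc 1 V,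
        ((1 / ((γ ^ 2 + 2 * V) * (σ ^ 2 / σ₀ ^ 2) + 1 + 2 * V)) *
            (∑ w, y w * (Real.sqrt 2 * Real.cos (2 * Real.pi * v * (w : ℕ) / (1 + 2 * V)))) *
            (Real.sqrt 2 * Real.cos ((v : ℝ) * α')) +
          (1 / ((γ ^ 2 + 2 * V) * (σ ^ 2 / σ₀ ^ 2) + 1 + 2 * V)) *
            (∑ w, y w * (Real.sqrt 2 * Real.sin (2 * Real.pi * v * (w : ℕ) / (1 + 2 * V)))) *
            (Real.sqrt 2 * Real.sin ((v : ℝ) * α'))) :=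
  posterior_mean_regularized_dft_general V γ σ₀ σ hγ hσ₀ y α' K hK k' hk'
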